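/- Let 0 < a < b < ∞ and let p ∈ C[0,∞) ∩ C¹(0,∞) with p(0)=0, p'(ρ) > 0 on (0,∞). Define H(ρ) = ρ ∫_1^ρ p(z)/z² dz and E(ρ|r) = H(ρ) − H'(r)(ρ−r) − H(r). Then there exists c = c(a,b) > 0 such that for all ρ ∈ [0,∞) with ρ ∉ [a/2, 2b] and all r ∈ [a,b], one has E(ρ|r) ≥ c·(1 + ρ). -/

import Mathlib

/-!
`H` is strictly convex on `(0, ∞)`, because `H'(ρ) = ∫₁^ρ p/z² + p(ρ)/ρ` has derivative `p'(ρ)/ρ > 0`,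
so `E(·|·)` is a Bregman divergence. The three-point identity
`E(ρ|r) = E(ρ|s) + E(s|r) + (H'(s) - H'(r))(ρ - s)` then shows that `E(ρ|r)` only grows as `ρ` moves
away from `r` or `r` moves away from `ρ`: for `ρ < a/2` it is at least `E(a/2|a) > 0`, and for
`ρ > 2b` it is at least `E(2b|b) + (H'(2b) - H'(b))(ρ - 2b)`, which grows linearly. The endpoint
`ρ = 0`, outside the domain of strict convexity, is covered by `E(0|r) = p(r) > 0`.
-/

open Set

noncomputable section

def relEnergy (H : ℝ → ℝ) (ρ r : ℝ) : ℝ := H ρ - deriv H r * (ρ - r) - H r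

def helmholtz (p : ℝ → ℝ) (ρ : ℝ) : ℝ := ρ * ∫ z in (1:ℝ)..ρ, p z / z ^ 2

end

section RelEnergy

variable {H : ℝ → ℝ} {ρ r s t : ℝ}

theorem relEnergy_three_point (H : ℝ → ℝ) (ρ s r : ℝ) :
    relEnergy H ρ r =
      relEnergy H ρ s + relEnergy H s r + (deriv H s - deriv H r) * (ρ - s) := by
  unfold relEnergy
  ring

theorem StrictConvexOn.relEnergy_pos {S : Set ℝ} (hH : StrictConvexOn ℝ S H) (hρ : ρ ∈ S)
    (hr : r ∈ S) (hρr : ρ ≠ r) (hd : DifferentiableAt ℝ H r) : 0 < relEnergy H ρ r := by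
  unfold relEnergy
  rcases hρr.lt_or_gt with hlt | hgt
  · have := hH.slope_lt_deriv hρ hr hlt hd
    rw [slope_def_field, div_lt_iff₀ (sub_pos.2 hlt)] at this
    nlinarith
  · have := hH.deriv_lt_slope hr hρ hgt hd
    rw [slope_def_field, lt_div_iff₀ (sub_pos.2 hgt)] at this
    nlinarith

theorem relEnergy_nonneg_of_strictConvexOn (hH : StrictConvexOn ℝ (Ioi 0) H)
    (hd : ∀ r, 0 < r → DifferentiableAt ℝ H r) (h0 : ∀ r, 0 < r → 0 ≤ relEnergy H 0 r)
    (hρ : 0 ≤ ρ) (hr : 0 < r) : 0 ≤ relEnergy H ρ r := by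
  rcases hρ.eq_or_lt with rfl | hρ
  · exact h0 r hr
  rcases eq_or_ne ρ r with rfl | hρr
  · simp [relEnergy]
  exact (hH.relEnergy_pos hρ hr hρr (hd r hr)).le

theorem relEnergy_le_relEnergy_of_le_of_le
    (hnn : ∀ ρ, 0 ≤ ρ → ∀ r, 0 < r → 0 ≤ relEnergy H ρ r) (hmono : MonotoneOn (deriv H) (Ioi 0))
    (hρ : 0 ≤ ρ) (hρs : ρ ≤ s) (hs : 0 < s) (hst : s ≤ t) (htr : t ≤ r) :
    relEnergy H s t ≤ relEnergy H ρ r := by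
  have ht : 0 < t := hs.trans_le hst
  have hr : 0 < r := ht.trans_le htr
  have hst' : deriv H s ≤ deriv H r := hmono hs hr (hst.trans htr)
  have htr' : deriv H t ≤ deriv H r := hmono ht hr htr
  have hmove_ρ : relEnergy H s r ≤ relEnergy H ρ r := by
    nlinarith [relEnergy_three_point H ρ s r, hnn ρ hρ s hs]
  have hmove_r : relEnergy H s t ≤ relEnergy H s r := by
    nlinarith [relEnergy_three_point H s t r, hnn t ht.le r hr]
  exact hmove_r.trans hmove_ρ

theorem relEnergy_add_mul_le_relEnergy
    (hnn : ∀ ρ, 0 ≤ ρ → ∀ r, 0 < r → 0 ≤ relEnergy H ρ r) (hmono : MonotoneOn (deriv H) (Ioi 0))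
    (hr : 0 < r) (hrt : r ≤ t) (hts : t ≤ s) (hsρ : s ≤ ρ) :
    relEnergy H s t + (deriv H s - deriv H t) * (ρ - s) ≤ relEnergy H ρ r := by
  have ht : 0 < t := hr.trans_le hrt
  have hs : 0 < s := ht.trans_le hts
  have hrt' : deriv H r ≤ deriv H t := hmono hr ht hrt
  have hmove_ρ : relEnergy H s r + (deriv H s - deriv H t) * (ρ - s) ≤ relEnergy H ρ r := by
    nlinarith [relEnergy_three_point H ρ s r, hnn ρ (hs.le.trans hsρ) s hs]
  have hmove_r : relEnergy H s t ≤ relEnergy H s r := by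
    nlinarith [relEnergy_three_point H s t r, hnn t ht.le r hr]
  linarith

theorem exists_mul_one_add_le_relEnergy {a b : ℝ} (hH : StrictConvexOn ℝ (Ioi 0) H)
    (hd : ∀ r, 0 < r → DifferentiableAt ℝ H r) (h0 : ∀ r, 0 < r → 0 ≤ relEnergy H 0 r)
    (ha : 0 < a) (hb : 0 < b) :
    ∃ c > (0:ℝ), ∀ ρ : ℝ, 0 ≤ ρ → ρ ∉ Icc (a/2) (2*b) →
      ∀ r ∈ Icc a b, c * (1 + ρ) ≤ relEnergy H ρ r := by
  have hmono : StrictMonoOn (deriv H) (Ioi 0) := hH.strictMonoOn_deriv hd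
  have hnn : ∀ ρ, 0 ≤ ρ → ∀ r, 0 < r → 0 ≤ relEnergy H ρ r := fun ρ hρ r hr =>
    relEnergy_nonneg_of_strictConvexOn hH hd h0 hρ hr
  set δa := relEnergy H (a/2) a
  set δb := relEnergy H (2*b) b
  set m := deriv H (2*b) - deriv H b
  have hδa : 0 < δa := hH.relEnergy_pos (half_pos ha) ha (by linarith) (hd a ha)
  have hδb : 0 < δb := hH.relEnergy_pos (by positivity : (0:ℝ) < 2*b) hb (by linarith) (hd b hb)
  have hm : 0 < m := sub_pos.2 (hmono hb (by positivity : (0:ℝ) < 2*b) (by linarith))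
  set c := min (δa / (1 + a/2)) (min (δb / (1 + 2*b)) m)
  refine ⟨c, by positivity, ?_⟩
  rintro ρ hρ hρ_res r ⟨har, hrb⟩
  rw [mem_Icc, not_and_or, not_le, not_le] at hρ_res
  rcases hρ_res with hρa | hρb
  · calc c * (1 + ρ) ≤ δa / (1 + a/2) * (1 + a/2) := by gcongr; exact min_le_left _ _
      _ = δa := by field_simp
      _ ≤ relEnergy H ρ r :=
        relEnergy_le_relEnergy_of_le_of_le hnn hmono.monotoneOn hρ hρa.le (half_pos ha)
          (by linarith) har
  · have hcb : c * (1 + 2*b) ≤ δb :=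
      (le_div_iff₀ (by positivity)).1 ((min_le_right _ _).trans (min_le_left _ _))
    have hcm : c ≤ m := (min_le_right _ _).trans (min_le_right _ _)
    calc c * (1 + ρ) = c * (1 + 2*b) + c * (ρ - 2*b) := by ring
      _ ≤ δb + m * (ρ - 2*b) := by gcongr
      _ ≤ relEnergy H ρ r :=
        relEnergy_add_mul_le_relEnergy hnn hmono.monotoneOn (ha.trans_le har) hrb (by linarith)
          hρb.le

end RelEnergy

section Helmholtz

variable {p p' : ℝ → ℝ} {x : ℝ}

theorem hasDerivAt_integral_div_sq (hp : ContinuousOn p (Ioi 0)) (hx : 0 < x) :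
    HasDerivAt (fun ρ => ∫ z in (1:ℝ)..ρ, p z / z ^ 2) (p x / x ^ 2) x := by
  have hf : ContinuousOn (fun z => p z / z ^ 2) (Ioi 0) :=
    hp.div (continuousOn_pow 2) fun z hz => pow_ne_zero 2 (ne_of_gt hz)
  have hsub : uIcc 1 x ⊆ Ioi 0 := fun z hz => lt_of_lt_of_le (lt_min one_pos hx) hz.1
  exact intervalIntegral.integral_hasDerivAt_right ((hf.mono hsub).intervalIntegrable)
    (hf.stronglyMeasurableAtFilter isOpen_Ioi x hx) (hf.continuousAt (isOpen_Ioi.mem_nhds hx))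

theorem hasDerivAt_helmholtz (hp : ContinuousOn p (Ioi 0)) (hx : 0 < x) :
    HasDerivAt (helmholtz p) ((∫ z in (1:ℝ)..x, p z / z ^ 2) + p x / x) x := by
  refine ((hasDerivAt_id' x).mul (hasDerivAt_integral_div_sq hp hx)).congr_deriv ?_
  field_simp

theorem strictMonoOn_deriv_helmholtz (hp : ∀ x ∈ Ioi (0:ℝ), HasDerivAt p (p' x) x)
    (hp' : ∀ x ∈ Ioi (0:ℝ), 0 < p' x) : StrictMonoOn (deriv (helmholtz p)) (Ioi 0) := by
  have hp_cont : ContinuousOn p (Ioi 0) := fun x hx => (hp x hx).continuousAt.continuousWithinAt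
  set G : ℝ → ℝ := fun ρ => (∫ z in (1:ℝ)..ρ, p z / z ^ 2) + p ρ / ρ
  have hG : ∀ x ∈ Ioi (0:ℝ), HasDerivAt G (p' x / x) x := fun x (hx : 0 < x) => by
    refine ((hasDerivAt_integral_div_sq hp_cont hx).add
      ((hp x hx).div (hasDerivAt_id' x) hx.ne')).congr_deriv ?_
    field_simp
    ring
  have hG_mono : StrictMonoOn G (Ioi 0) :=
    strictMonoOn_of_deriv_pos (convex_Ioi 0)
      (fun x hx => (hG x hx).continuousAt.continuousWithinAt) fun x hx => by
        rw [interior_Ioi] at hx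
        rw [(hG x hx).deriv]
        exact div_pos (hp' x hx) hx
  intro x hx y hy hxy
  rw [(hasDerivAt_helmholtz hp_cont hx).deriv, (hasDerivAt_helmholtz hp_cont hy).deriv]
  exact hG_mono hx hy hxy

theorem strictConvexOn_helmholtz (hp : ∀ x ∈ Ioi (0:ℝ), HasDerivAt p (p' x) x)
    (hp' : ∀ x ∈ Ioi (0:ℝ), 0 < p' x) : StrictConvexOn ℝ (Ioi 0) (helmholtz p) := by
  have hp_cont : ContinuousOn p (Ioi 0) := fun x hx => (hp x hx).continuousAt.continuousWithinAt
  refine StrictMonoOn.strictConvexOn_of_deriv (convex_Ioi 0)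
    (fun x hx => (hasDerivAt_helmholtz hp_cont hx).continuousAt.continuousWithinAt) ?_
  rw [interior_Ioi]
  exact strictMonoOn_deriv_helmholtz hp hp'

theorem relEnergy_helmholtz_zero_left (hp : ContinuousOn p (Ioi 0)) (hx : 0 < x) :
    relEnergy (helmholtz p) 0 x = p x := by
  rw [relEnergy, (hasDerivAt_helmholtz hp hx).deriv]
  simp only [helmholtz, zero_mul]
  field_simp
  ring

end Helmholtz

theorem relative_energy_residual_lower_bound_general
    (a b : ℝ) (ha : 0 < a) (hab : a < b)
    (p p' H : ℝ → ℝ) (E : ℝ → ℝ → ℝ)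
    (hp_cont : ContinuousOn p (Set.Ici (0:ℝ)))
    (hp0 : p 0 = 0)
    (hp_deriv : ∀ x ∈ Set.Ioi (0:ℝ), HasDerivAt p (p' x) x)
    (hp'_pos : ∀ x ∈ Set.Ioi (0:ℝ), 0 < p' x)
    (hH : ∀ ρ : ℝ, H ρ = ρ * ∫ z in (1:ℝ)..ρ, p z / z ^ 2)
    (hE : ∀ ρ r : ℝ, E ρ r = H ρ - deriv H r * (ρ - r) - H r) :
    ∃ c > (0:ℝ), ∀ ρ : ℝ, 0 ≤ ρ → ρ ∉ Set.Icc (a/2) (2*b) →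
      ∀ r ∈ Set.Icc a b, c * (1 + ρ) ≤ E ρ r := by
  obtain rfl : H = helmholtz p := funext hH
  obtain rfl : E = relEnergy (helmholtz p) := funext fun ρ => funext (hE ρ)
  have hp_mono : StrictMonoOn p (Ici 0) :=
    strictMonoOn_of_deriv_pos (convex_Ici 0) hp_cont fun x hx => by
      rw [interior_Ici] at hx
      rw [(hp_deriv x hx).deriv]
      exact hp'_pos x hx
  have hp_Ioi : ContinuousOn p (Ioi 0) := hp_cont.mono Ioi_subset_Ici_self
  refine exists_mul_one_add_le_relEnergy (strictConvexOn_helmholtz hp_deriv hp'_pos)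
    (fun r hr => (hasDerivAt_helmholtz hp_Ioi hr).differentiableAt) (fun r hr => ?_) ha
    (ha.trans hab)
  rw [relEnergy_helmholtz_zero_left hp_Ioi hr, ← hp0]
  exact (hp_mono self_mem_Ici hr.le hr).le

/-- Residual lower bound for the relative energy (Lemma 7.2, residual part):
`E(ρ|r) ≥ c(a,b)·(1+ρ)` for `ρ ∈ [0,∞) \ [a/2, 2b]` and `r ∈ [a,b]`. -/
theorem relative_energy_residual_lower_bound
    (a b : ℝ) (ha : 0 < a) (hab : a < b)
    (p p' H : ℝ → ℝ) (E : ℝ → ℝ → ℝ)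
    (hp_cont : ContinuousOn p (Set.Ici (0:ℝ)))
    (hp0 : p 0 = 0)
    (hp_deriv : ∀ x ∈ Set.Ioi (0:ℝ), HasDerivAt p (p' x) x)
    (hp'_cont : ContinuousOn p' (Set.Ioi (0:ℝ)))
    (hp'_pos : ∀ x ∈ Set.Ioi (0:ℝ), 0 < p' x)
    (hH : ∀ ρ : ℝ, H ρ = ρ * ∫ z in (1:ℝ)..ρ, p z / z ^ 2)
    (hE : ∀ ρ r : ℝ, E ρ r = H ρ - deriv H r * (ρ - r) - H r) :
    ∃ c > (0:ℝ), ∀ ρ : ℝ, 0 ≤ ρ → ρ ∉ Set.Icc (a/2) (2*b) →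
      ∀ r ∈ Set.Icc a b, c * (1 + ρ) ≤ E ρ r :=
  relative_energy_residual_lower_bound_general a b ha hab p p' H E hp_cont hp0 hp_deriv hp'_pos hH
    hE
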